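/- The bracket defined above makes L = W ⊕ A ⊕ A a Lie algebra over K: it is K-bilinear, alternating ([x,x] = 0 for all x ∈ L), and satisfies the Jacobi identity [x,[y,z]] + [y,[z,x]] + [z,[x,y]] = 0 for all x, y, z ∈ L. (This is Brown's characteristic-2 analog L of the Melikyan construction, whose suitably graded truncated version contains the simple Shen Lie algebra.) -/

import Mathlib

open MvPolynomial

/-- The polynomial ring `A = K[u₁, u₂]` (index `0` is `u₁`, index `1` is `u₂`). -/
abbrev A2 (K : Type*) [Field K] := MvPolynomial (Fin 2) K

/-- Vector fields `a∂₁ + b∂₂` on `A`, encoded by the pair of coefficients `(a, b)`. -/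
abbrev VF2 (K : Type*) [Field K] := A2 K × A2 K

/-- Brown's space `L = W ⊕ A·vol ⊕ A`, elements `(D, v, f)`. -/
abbrev BrownL (K : Type*) [Field K] := VF2 K × A2 K × A2 K

noncomputable section

variable (K : Type*) [Field K]

/-- The action of a vector field `D = a∂₁ + b∂₂` on a function. -/
def vfAct (D : VF2 K) (h : A2 K) : A2 K := D.1 * pderiv 0 h + D.2 * pderiv 1 h

/-- The divergence `Div(a∂₁ + b∂₂) = ∂₁a + ∂₂b`. -/
def vfDiv (D : VF2 K) : A2 K := pderiv 0 D.1 + pderiv 1 D.2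

/-- The Hamiltonian field `H_f = (∂₁f)∂₂ + (∂₂f)∂₁`, as a coefficient pair. -/
def hamVF (f : A2 K) : VF2 K := (pderiv 1 f, pderiv 0 f)

/-- The commutator `DD' − D'D` of vector fields, as a coefficient pair. -/
def vfComm (D D' : VF2 K) : VF2 K :=
  (vfAct K D D'.1 - vfAct K D' D.1, vfAct K D D'.2 - vfAct K D' D.2)

/-- Brown's bracket on `L = W ⊕ A·vol ⊕ A`:
`[(D,v,f), (D',v',f')] = (DD' − D'D + v·H_{f'} + v'·H_f,
  D(v') + v'·Div D + D'(v) + v·Div D' + H_f(f'), D(f') + D'(f))`. -/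
def brownBr (x y : BrownL K) : BrownL K :=
  ( vfComm K x.1 y.1 + x.2.1 • hamVF K y.2.2 + y.2.1 • hamVF K x.2.2,
    vfAct K x.1 y.2.1 + y.2.1 * vfDiv K x.1 + vfAct K y.1 x.2.1 + x.2.1 * vfDiv K y.1
      + vfAct K (hamVF K x.2.2) y.2.2,
    vfAct K x.1 y.2.2 + vfAct K y.1 x.2.2 )

end

/-!
A vector field on `A` is determined by its action on functions, so every identity in `L` can be
tested on a function `g ∈ A`. There, derivations are pushed inward by the Leibniz rule, the
commutator rule `[D, E](g) = D(E g) − E(D g)`, and the characteristic-2 identity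
`D(H_f g) = H_{D f} g + H_f(D g) + (Div D)·H_f g`, which says `[D, H_f] = H_{D f} + (Div D)·H_f`.
After this expansion every term of the Jacobiator occurs twice, hence vanishes in characteristic 2,
except for the part of the `W`-component coming from three functions `f, g, h`; that part is
`H_g(h)·H_f + H_h(f)·H_g + H_f(g)·H_h`, which vanishes coefficientwise in characteristic 2.
-/

theorem MvPolynomial.pderiv_pderiv_comm {σ R : Type*} [CommSemiring R] (i j : σ)
    (p : MvPolynomial σ R) : pderiv i (pderiv j p) = pderiv j (pderiv i p) := by
  classical
  induction p using MvPolynomial.induction_on with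
  | C a => simp
  | add p q hp hq => simp only [map_add, hp, hq]
  | mul_X p k hp =>
    simp only [pderiv_mul, pderiv_X, map_add, hp, Pi.single_apply]
    split_ifs <;> simp [add_right_comm]

section VectorFields

variable {K : Type*} [Field K]

theorem VF2.ext_vfAct {D E : VF2 K} (h : ∀ g, vfAct K D g = vfAct K E g) : D = E := by
  refine Prod.ext ?_ ?_
  · simpa [vfAct, pderiv_X] using h (X 0)
  · simpa [vfAct, pderiv_X] using h (X 1)

theorem VF2.smul_eq_C_smul (c : K) (D : VF2 K) : c • D = (C c : A2 K) • D :=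
  Prod.ext (smul_eq_C_mul _ _) (smul_eq_C_mul _ _)

@[simp] theorem vfAct_zero_left (g : A2 K) : vfAct K 0 g = 0 := by
  simp only [vfAct, Prod.fst_zero, Prod.snd_zero, zero_mul, add_zero]

@[simp] theorem vfAct_add_left (D E : VF2 K) (g : A2 K) :
    vfAct K (D + E) g = vfAct K D g + vfAct K E g := by
  simp only [vfAct, Prod.fst_add, Prod.snd_add]
  ring

@[simp] theorem vfAct_smul_left (a : A2 K) (D : VF2 K) (g : A2 K) :
    vfAct K (a • D) g = a * vfAct K D g := by
  simp only [vfAct, Prod.smul_fst, Prod.smul_snd, smul_eq_mul]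
  ring

@[simp] theorem vfAct_add (D : VF2 K) (g h : A2 K) :
    vfAct K D (g + h) = vfAct K D g + vfAct K D h := by
  simp only [vfAct, map_add]
  ring

@[simp] theorem vfAct_sub (D : VF2 K) (g h : A2 K) :
    vfAct K D (g - h) = vfAct K D g - vfAct K D h := by
  simp only [vfAct, map_sub]
  ring

@[simp] theorem vfAct_mul (D : VF2 K) (g h : A2 K) :
    vfAct K D (g * h) = g * vfAct K D h + h * vfAct K D g := by
  simp only [vfAct, pderiv_mul]
  ring

@[simp] theorem vfAct_C (D : VF2 K) (c : K) : vfAct K D (C c) = 0 := by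
  simp only [vfAct, derivation_C, mul_zero, add_zero]

theorem vfAct_vfComm (D E : VF2 K) (g : A2 K) :
    vfAct K (vfComm K D E) g = vfAct K D (vfAct K E g) - vfAct K E (vfAct K D g) := by
  simp only [vfAct, vfComm, map_add, pderiv_mul, pderiv_pderiv_comm (0 : Fin 2) 1]
  ring

theorem vfAct_hamVF_comm (f g : A2 K) : vfAct K (hamVF K f) g = vfAct K (hamVF K g) f := by
  simp only [vfAct, hamVF]
  ring

@[simp] theorem hamVF_add (f g : A2 K) : hamVF K (f + g) = hamVF K f + hamVF K g := by
  simp only [hamVF, map_add, Prod.mk_add_mk]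

@[simp] theorem hamVF_mul (f g : A2 K) : hamVF K (f * g) = f • hamVF K g + g • hamVF K f := by
  refine Prod.ext ?_ ?_ <;>
    simp only [hamVF, pderiv_mul, Prod.smul_fst, Prod.smul_snd, Prod.fst_add, Prod.snd_add,
      smul_eq_mul] <;>
    ring

@[simp] theorem hamVF_C (c : K) : hamVF K (C c) = 0 := by
  simp only [hamVF, derivation_C, Prod.mk_zero_zero]

@[simp] theorem vfDiv_add (D E : VF2 K) : vfDiv K (D + E) = vfDiv K D + vfDiv K E := by
  simp only [vfDiv, Prod.fst_add, Prod.snd_add, map_add]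
  ring

@[simp] theorem vfDiv_smul (a : A2 K) (D : VF2 K) :
    vfDiv K (a • D) = a * vfDiv K D + vfAct K D a := by
  simp only [vfDiv, vfAct, Prod.smul_fst, Prod.smul_snd, smul_eq_mul, pderiv_mul]
  ring

theorem vfDiv_vfComm (D E : VF2 K) :
    vfDiv K (vfComm K D E) = vfAct K D (vfDiv K E) - vfAct K E (vfDiv K D) := by
  simp only [vfDiv, vfAct, vfComm, map_add, map_sub, pderiv_mul, pderiv_pderiv_comm (0 : Fin 2) 1]
  ring

variable [CharP K 2]

@[simp] theorem vfDiv_hamVF (f : A2 K) : vfDiv K (hamVF K f) = 0 := by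
  simp only [vfDiv, hamVF, pderiv_pderiv_comm (0 : Fin 2) 1, CharTwo.add_self_eq_zero]

@[simp] theorem vfAct_hamVF_self (f : A2 K) : vfAct K (hamVF K f) f = 0 := by
  simp only [vfAct, hamVF, mul_comm (pderiv 1 f), CharTwo.add_self_eq_zero]

theorem vfAct_vfAct_hamVF (D : VF2 K) (f g : A2 K) :
    vfAct K D (vfAct K (hamVF K f) g) = vfAct K (hamVF K (vfAct K D f)) g
      + vfAct K (hamVF K f) (vfAct K D g) + vfDiv K D * vfAct K (hamVF K f) g := by
  simp only [vfDiv, vfAct, hamVF, map_add, pderiv_mul, pderiv_pderiv_comm (0 : Fin 2) 1]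
  grind

theorem hamVF_cyclic (f g h : A2 K) :
    vfAct K (hamVF K g) h • hamVF K f + vfAct K (hamVF K h) f • hamVF K g
      + vfAct K (hamVF K f) g • hamVF K h = 0 := by
  refine Prod.ext ?_ ?_ <;>
    simp only [vfAct, hamVF, Prod.fst_add, Prod.snd_add, Prod.smul_fst, Prod.smul_snd,
      smul_eq_mul, Prod.fst_zero, Prod.snd_zero] <;>
    grind

end VectorFields

section Bracket

variable {K : Type*} [Field K]

theorem BrownL.ext_vfAct {x y : BrownL K} (hD : ∀ g, vfAct K x.1 g = vfAct K y.1 g)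
    (hv : x.2.1 = y.2.1) (hf : x.2.2 = y.2.2) : x = y :=
  Prod.ext (VF2.ext_vfAct hD) (Prod.ext hv hf)

theorem brownBr_add_left (x y z : BrownL K) :
    brownBr K (x + y) z = brownBr K x z + brownBr K y z := by
  refine BrownL.ext_vfAct (fun g => ?_) ?_ ?_ <;>
    simp only [brownBr, Prod.fst_add, Prod.snd_add, add_smul, hamVF_add, smul_add,
      vfAct_add_left, vfDiv_add, vfAct_add, vfAct_vfComm, vfAct_smul_left, Prod.mk_add_mk] <;>
    ring

theorem brownBr_smul_left (c : K) (x y : BrownL K) :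
    brownBr K (c • x) y = c • brownBr K x y := by
  refine BrownL.ext_vfAct (fun g => ?_) ?_ ?_ <;>
    simp only [brownBr, Prod.smul_fst, Prod.smul_snd, Prod.smul_mk, VF2.smul_eq_C_smul,
      smul_eq_C_mul, smul_eq_mul, mul_smul, smul_add, smul_zero, add_zero, mul_zero, hamVF_mul,
      hamVF_C, vfAct_add_left, vfAct_smul_left, vfAct_vfComm, vfAct_mul, vfAct_C, vfDiv_smul] <;>
    ring

variable [CharP K 2]

theorem brownBr_comm (x y : BrownL K) : brownBr K x y = brownBr K y x := by
  refine BrownL.ext_vfAct (fun g => ?_) ?_ ?_ <;>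
    simp only [brownBr, vfAct_add_left, vfAct_vfComm, vfAct_smul_left, vfAct_hamVF_comm] <;>
    grind

theorem brownBr_self (x : BrownL K) : brownBr K x x = 0 := by
  refine BrownL.ext_vfAct (fun g => ?_) ?_ ?_ <;>
    simp only [brownBr, vfAct_hamVF_self, vfAct_add_left, vfAct_vfComm, vfAct_smul_left,
      vfAct_zero_left, Prod.fst_zero, Prod.snd_zero, sub_self, zero_add, add_zero] <;>
    grind

theorem brownBr_jacobi (x y z : BrownL K) :
    brownBr K x (brownBr K y z) + brownBr K y (brownBr K z x) + brownBr K z (brownBr K x y)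
      = 0 := by
  have hcyc (g : A2 K) := congrArg (vfAct K · g) (hamVF_cyclic x.2.2 y.2.2 z.2.2)
  refine BrownL.ext_vfAct (fun g => ?_) ?_ ?_ <;>
    simp only [brownBr, Prod.mk_add_mk, Prod.fst_zero, Prod.snd_zero,
      hamVF_add, smul_add, mul_zero, zero_add, vfAct_add, vfAct_sub, vfAct_mul, vfAct_add_left,
      vfAct_smul_left, vfAct_zero_left, vfAct_vfComm, vfAct_vfAct_hamVF, vfAct_hamVF_comm,
      vfDiv_add, vfDiv_smul, vfDiv_vfComm, vfDiv_hamVF] at hcyc ⊢ <;>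
    grind

end Bracket

/-- For `p = 2`, Brown's bracket makes `L = W ⊕ A ⊕ A` a Lie algebra over `K`:
it is `K`-bilinear, alternating, and satisfies the Jacobi identity. -/
theorem brownBr_isLieAlgebra {K : Type*} [Field K] [CharP K 2] :
    (∀ x y z : BrownL K, brownBr K (x + y) z = brownBr K x z + brownBr K y z) ∧
    (∀ x y z : BrownL K, brownBr K x (y + z) = brownBr K x y + brownBr K x z) ∧
    (∀ (c : K) (x y : BrownL K), brownBr K (c • x) y = c • brownBr K x y) ∧
    (∀ (c : K) (x y : BrownL K), brownBr K x (c • y) = c • brownBr K x y) ∧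
    (∀ x : BrownL K, brownBr K x x = 0) ∧
    (∀ x y z : BrownL K,
      brownBr K x (brownBr K y z) + brownBr K y (brownBr K z x)
        + brownBr K z (brownBr K x y) = 0) := by
  refine ⟨brownBr_add_left, fun x y z => ?_, brownBr_smul_left, fun c x y => ?_, brownBr_self,
    brownBr_jacobi⟩
  · rw [brownBr_comm, brownBr_add_left, brownBr_comm y, brownBr_comm z]
  · rw [brownBr_comm, brownBr_smul_left, brownBr_comm]
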